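/- Suppose A is drawn from SSBM(n,x*,p⁺,p⁻,q⁺,q⁻) under Assumption 1. Let γ, γ' be constants with 0 < γ + 1/log n < γ'. Then for all sufficiently large n and every index i ∈ {1,…,n}, P( x*_i · (Wx*)_i ≤ γ·log n ) ≤ n^{ −½((√α⁺ − √β⁺)² + (√α⁻ − √β⁻)²) + (γ'/2)·log(α⁺/β⁺) }. (Note that (Wx*)_i = (Ãx*)_i since Jx* = 0.) -/

import Mathlib

open MeasureTheory ProbabilityTheory Matrix

noncomputable section

/-- Entrywise positive part `A⁺` of a matrix. -/
def aPos {n : ℕ} (A : Matrix (Fin n) (Fin n) ℝ) : Matrix (Fin n) (Fin n) ℝ :=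
  Matrix.of fun i j => max (A i j) 0

/-- Entrywise negative part `A⁻` of a matrix. -/
def aNeg {n : ℕ} (A : Matrix (Fin n) (Fin n) ℝ) : Matrix (Fin n) (Fin n) ℝ :=
  Matrix.of fun i j => max (-(A i j)) 0

/-- Euclidean norm of a vector in `ℝⁿ`. -/
def vnorm {n : ℕ} (v : Fin n → ℝ) : ℝ := Real.sqrt (∑ i, v i ^ 2)

/-- Entrywise sign of a vector: `1` on nonnegative entries, `-1` otherwise. -/
def signVec {n : ℕ} (v : Fin n → ℝ) : Fin n → ℝ := fun i => if 0 ≤ v i then 1 else -1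

/-- Real cube root. -/
def cbrt (x : ℝ) : ℝ := if 0 ≤ x then x ^ ((1 : ℝ)/3) else -((-x) ^ ((1 : ℝ)/3))

/-- The signed stochastic block model `SSBM(n, xs, pp, pm, qp, qm)`:
`A` is a random symmetric `{-1,0,1}`-matrix with zero diagonal, whose upper triangular
entries are independent, equal to `1` (resp. `-1`) with probability `pp` (resp. `pm`)
within communities and `qp` (resp. `qm`) across communities, relative to the
community label vector `xs ∈ {±1}ⁿ` with `1ᵀ xs = 0`. -/
structure IsSSBM {Ω : Type} [MeasurableSpace Ω] (P : Measure Ω)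
    {n : ℕ} (xs : Fin n → ℝ) (pp pm qp qm : ℝ)
    (A : Ω → Matrix (Fin n) (Fin n) ℝ) : Prop where
  pp_pos : 0 < pp
  pm_pos : 0 < pm
  qp_pos : 0 < qp
  qm_pos : 0 < qm
  p_sum_le : pp + pm ≤ 1
  q_sum_le : qp + qm ≤ 1
  labels : ∀ i, xs i = 1 ∨ xs i = -1
  balanced : ∑ i, xs i = 0
  meas : ∀ i j, Measurable fun ω => A ω i j
  symm : ∀ ω i j, A ω i j = A ω j i
  diag : ∀ ω i, A ω i i = 0
  vals : ∀ ω i j, A ω i j = 1 ∨ A ω i j = -1 ∨ A ω i j = 0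
  indep : iIndepFun (m := fun _ : {p : Fin n × Fin n // p.1 < p.2} => (inferInstance : MeasurableSpace ℝ))
      (fun (p : {p : Fin n × Fin n // p.1 < p.2}) ω => A ω p.1.1 p.1.2) P
  probIn : ∀ i j : Fin n, i < j → xs i * xs j = 1 →
      P {ω | A ω i j = 1} = ENNReal.ofReal pp ∧ P {ω | A ω i j = -1} = ENNReal.ofReal pm
  probOut : ∀ i j : Fin n, i < j → xs i * xs j = -1 →
      P {ω | A ω i j = 1} = ENNReal.ofReal qp ∧ P {ω | A ω i j = -1} = ENNReal.ofReal qm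

/-- Sum of the strictly upper triangular entries of a matrix. -/
def upperSum {n : ℕ} (M : Matrix (Fin n) (Fin n) ℝ) : ℝ :=
  ∑ i, ∑ j, if i < j then M i j else 0

/-- The all-ones `n × n` matrix. -/
def Jmat (n : ℕ) : Matrix (Fin n) (Fin n) ℝ := Matrix.of fun _ _ => 1

/-- The weight `ξ = log(β⁻/α⁻)/log(α⁺/β⁺)`. -/
def xiOf (αp βp αm βm : ℝ) : ℝ := Real.log (βm / αm) / Real.log (αp / βp)

/-- `Ã = A⁺ - ξ A⁻`. -/
def Atil {Ω : Type} {n : ℕ} (ξ : ℝ) (A : Ω → Matrix (Fin n) (Fin n) ℝ) (ω : Ω) :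
    Matrix (Fin n) (Fin n) ℝ := aPos (A ω) - ξ • aNeg (A ω)

/-- `ρ = 1ᵀ Ã 1 / n²`. -/
def rhoOf {Ω : Type} {n : ℕ} (ξ : ℝ) (A : Ω → Matrix (Fin n) (Fin n) ℝ) (ω : Ω) : ℝ :=
  (∑ i, ∑ j, Atil ξ A ω i j) / (n : ℝ) ^ 2

/-- `W = Ã - ρ J`. -/
def Wof {Ω : Type} {n : ℕ} (ξ : ℝ) (A : Ω → Matrix (Fin n) (Fin n) ℝ) (ω : Ω) :
    Matrix (Fin n) (Fin n) ℝ := Atil ξ A ω - rhoOf ξ A ω • Jmat n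

/-- `μ` is an eigenvalue of the matrix `M`. -/
def IsEigenvalue {n : ℕ} (M : Matrix (Fin n) (Fin n) ℝ) (μ : ℝ) : Prop :=
  ∃ v : Fin n → ℝ, v ≠ 0 ∧ M.mulVec v = μ • v

/-- The ℓ₂ operator (spectral) norm of a real square matrix. -/
def specNorm {n : ℕ} (M : Matrix (Fin n) (Fin n) ℝ) : ℝ :=
  ‖Matrix.toEuclideanCLM (𝕜 := ℝ) M‖

/-- Entrywise expectation of a random matrix. -/
def Emat {Ω : Type} [MeasurableSpace Ω] (P : Measure Ω) {n : ℕ}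
    (M : Ω → Matrix (Fin n) (Fin n) ℝ) : Matrix (Fin n) (Fin n) ℝ :=
  Matrix.of fun i j => ∫ ω, M ω i j ∂P

/-!
Since `J x* = 0`, `x*_i (W x*)_i = ∑_{j ≠ i} x*_i x*_j Ã_ij` is a sum of independent variables,
each taking the three values `0, x*_i x*_j, -ξ x*_i x*_j`. Apply the Chernoff bound for the lower
tail at `t = -½ log(α⁺/β⁺)`: the choice of `ξ` makes `t ξ = -½ log(β⁻/α⁻)` as well, so every
exponential in the moment generating functions is a ratio `√β/√α` or `√α/√β`. Bounding each
factor by `1 + x ≤ eˣ`, the `n/2` cross-community and `n/2 - 1` same-community factors multiply to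
`n^{-½((√α⁺-√β⁺)² + (√α⁻-√β⁻)²)}` up to a factor `exp(O(log n / n))`, which is absorbed by the
slack `(γ' - γ) log n > 1`.
-/

open Real Filter Topology Finset

section Ternary

variable {Ω : Type*} {X : Ω → ℝ} {φ : ℝ → ℝ}

lemma exp_mul_comp_eq_of_ternary (hX : ∀ ω, X ω = 1 ∨ X ω = -1 ∨ X ω = 0) (hφ : φ 0 = 0)
    (t : ℝ) :
    (fun ω => exp (t * φ (X ω))) = fun ω => 1
      + {ω | X ω = 1}.indicator (fun _ => exp (t * φ 1) - 1) ω
      + {ω | X ω = -1}.indicator (fun _ => exp (t * φ (-1)) - 1) ω := by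
  funext ω
  rcases hX ω with h | h | h <;> norm_num [Set.indicator_apply, h, hφ]

variable [MeasurableSpace Ω] {P : Measure Ω}

lemma integrable_exp_mul_comp_of_ternary [IsFiniteMeasure P] (hXm : Measurable X)
    (hX : ∀ ω, X ω = 1 ∨ X ω = -1 ∨ X ω = 0) (hφ : φ 0 = 0) (t : ℝ) :
    Integrable (fun ω => exp (t * φ (X ω))) P := by
  rw [exp_mul_comp_eq_of_ternary hX hφ t]
  exact ((integrable_const 1).add ((integrable_const _).indicator
    (hXm (measurableSet_singleton 1)))).add
    ((integrable_const _).indicator (hXm (measurableSet_singleton (-1))))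

lemma mgf_comp_of_ternary [IsProbabilityMeasure P] (hXm : Measurable X)
    (hX : ∀ ω, X ω = 1 ∨ X ω = -1 ∨ X ω = 0) (hφ : φ 0 = 0) (t : ℝ) :
    mgf (fun ω => φ (X ω)) P t = 1 + P.real {ω | X ω = 1} * (exp (t * φ 1) - 1)
      + P.real {ω | X ω = -1} * (exp (t * φ (-1)) - 1) := by
  have h1 : MeasurableSet {ω | X ω = 1} := hXm (measurableSet_singleton 1)
  have h2 : MeasurableSet {ω | X ω = -1} := hXm (measurableSet_singleton (-1))
  rw [mgf, exp_mul_comp_eq_of_ternary hX hφ t, integral_add, integral_add, integral_const,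
    integral_indicator_const _ h1, integral_indicator_const _ h2]
  · simp [smul_eq_mul]
  all_goals fun_prop (disch := assumption)

end Ternary

def signedWeight (ξ a : ℝ) : ℝ := max a 0 - ξ * max (-a) 0

@[simp] lemma signedWeight_zero (ξ : ℝ) : signedWeight ξ 0 = 0 := by simp [signedWeight]
@[simp] lemma signedWeight_one (ξ : ℝ) : signedWeight ξ 1 = 1 := by simp [signedWeight]
@[simp] lemma signedWeight_neg_one (ξ : ℝ) : signedWeight ξ (-1) = -ξ := by simp [signedWeight]

@[fun_prop] lemma measurable_signedWeight (ξ : ℝ) : Measurable (signedWeight ξ) := by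
  unfold signedWeight; fun_prop

lemma sum_ite_mul_eq_one_erase {n : ℕ} {x : Fin n → ℝ} (hx : ∀ j, x j = 1 ∨ x j = -1)
    (hbal : ∑ j, x j = 0) (i : Fin n) (a b : ℝ) :
    ∑ j ∈ univ.erase i, (if x i * x j = 1 then a else b) = ((n : ℝ) / 2 - 1) * a + n / 2 * b := by
  have hsplit : ∀ j, (if x i * x j = 1 then a else b) = (a + b) / 2 + x i * x j * ((a - b) / 2) := by
    intro j
    rcases hx i with hi | hi <;> rcases hx j with hj | hj <;> norm_num [hi, hj] <;> ring
  simp only [hsplit, sum_erase_eq_sub (mem_univ i), sum_add_distrib, ← sum_mul, ← mul_sum,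
    hbal, sum_const, card_univ, Fintype.card_fin, nsmul_eq_mul]
  rcases hx i with hi | hi <;> norm_num [hi] <;> ring

section Model

variable {Ω : Type} {n : ℕ} {xs : Fin n → ℝ} {A : Ω → Matrix (Fin n) (Fin n) ℝ}

lemma Atil_apply (ξ : ℝ) (ω : Ω) (i j : Fin n) : Atil ξ A ω i j = signedWeight ξ (A ω i j) := by
  simp [Atil, aPos, aNeg, signedWeight]

lemma Wof_mulVec_of_sum_eq_zero (h : ∑ i, xs i = 0) (ξ : ℝ) (ω : Ω) :
    Wof ξ A ω *ᵥ xs = Atil ξ A ω *ᵥ xs := by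
  ext i
  simp [Wof, Jmat, mulVec, dotProduct, sub_mul, ← mul_sum, h]

lemma mul_Atil_mulVec_apply {ω : Ω} (hdiag : ∀ i, A ω i i = 0) (ξ : ℝ) (i : Fin n) :
    xs i * (Atil ξ A ω *ᵥ xs) i = ∑ j ∈ univ.erase i, xs i * xs j * signedWeight ξ (A ω i j) := by
  rw [mulVec, dotProduct, mul_sum, ← sum_erase_add _ _ (mem_univ i)]
  simp only [Atil_apply, hdiag, signedWeight_zero, zero_mul, mul_zero, add_zero]
  exact sum_congr rfl fun j _ => by ring

end Model

namespace IsSSBM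

variable {Ω : Type} [MeasurableSpace Ω] {P : Measure Ω} {n : ℕ} {xs : Fin n → ℝ}
  {pp pm qp qm : ℝ} {A : Ω → Matrix (Fin n) (Fin n) ℝ}

lemma iIndepFun_row (hA : IsSSBM P xs pp pm qp qm A) (i : Fin n) :
    iIndepFun (fun (j : {j // j ≠ i}) ω => A ω i j) P := by
  let e : {j // j ≠ i} → {p : Fin n × Fin n // p.1 < p.2} :=
    fun j => ⟨(min i j, max i j), min_lt_max.2 (Ne.symm j.2)⟩
  have he : e.Injective := by
    rintro ⟨j, hj⟩ ⟨k, hk⟩ hjk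
    simp only [e, Subtype.mk.injEq, Prod.mk.injEq] at hjk
    rw [Fin.ext_iff, Fin.ext_iff, Fin.coe_min, Fin.coe_min, Fin.coe_max, Fin.coe_max] at hjk
    rw [Ne, Fin.ext_iff] at hj hk
    rw [Subtype.mk.injEq, Fin.ext_iff]
    omega
  convert hA.indep.precomp he using 3 with j ω
  rcases le_total i j with h | h
  · simp [e, min_eq_left h, max_eq_right h]
  · simp [e, min_eq_right h, max_eq_left h, hA.symm ω i j]

lemma setOf_entry_comm (hA : IsSSBM P xs pp pm qp qm A) (i j : Fin n) (a : ℝ) :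
    {ω | A ω i j = a} = {ω | A ω j i = a} := by
  simp only [hA.symm _ i j]

lemma probIn_of_ne (hA : IsSSBM P xs pp pm qp qm A) {i j : Fin n} (hij : i ≠ j)
    (hc : xs i * xs j = 1) :
    P {ω | A ω i j = 1} = ENNReal.ofReal pp ∧ P {ω | A ω i j = -1} = ENNReal.ofReal pm := by
  rcases hij.lt_or_gt with h | h
  · exact hA.probIn i j h hc
  · rw [hA.setOf_entry_comm i j, hA.setOf_entry_comm i j]
    exact hA.probIn j i h (by rwa [mul_comm])

lemma probOut_of_ne (hA : IsSSBM P xs pp pm qp qm A) {i j : Fin n} (hij : i ≠ j)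
    (hc : xs i * xs j = -1) :
    P {ω | A ω i j = 1} = ENNReal.ofReal qp ∧ P {ω | A ω i j = -1} = ENNReal.ofReal qm := by
  rcases hij.lt_or_gt with h | h
  · exact hA.probOut i j h hc
  · rw [hA.setOf_entry_comm i j, hA.setOf_entry_comm i j]
    exact hA.probOut j i h (by rwa [mul_comm])

lemma mgf_term_le [IsProbabilityMeasure P] (hA : IsSSBM P xs pp pm qp qm A) {i j : Fin n} (hij : i ≠ j) (ξ t : ℝ) :
    mgf (fun ω => xs i * xs j * signedWeight ξ (A ω i j)) P t ≤
      exp (if xs i * xs j = 1 then pp * (exp t - 1) + pm * (exp (-(t * ξ)) - 1)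
        else qp * (exp (-t) - 1) + qm * (exp (t * ξ) - 1)) := by
  refine ((mgf_comp_of_ternary (φ := fun a => xs i * xs j * signedWeight ξ a) (hA.meas i j)
    (hA.vals · i j) (by simp) t).trans ?_).trans_le (add_one_le_exp _)
  have hc : xs i * xs j = 1 ∨ xs i * xs j = -1 := by
    rcases hA.labels i with hi | hi <;> rcases hA.labels j with hj | hj <;> norm_num [hi, hj]
  rcases hc with hc | hc
  · obtain ⟨h1, h2⟩ := hA.probIn_of_ne hij hc
    rw [if_pos hc]
    simp only [measureReal_def, h1, h2, ENNReal.toReal_ofReal hA.pp_pos.le,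
      ENNReal.toReal_ofReal hA.pm_pos.le, hc, signedWeight_one, signedWeight_neg_one]
    ring_nf
  · obtain ⟨h1, h2⟩ := hA.probOut_of_ne hij hc
    rw [if_neg (by norm_num [hc])]
    simp only [measureReal_def, h1, h2, ENNReal.toReal_ofReal hA.qp_pos.le,
      ENNReal.toReal_ofReal hA.qm_pos.le, hc, signedWeight_one, signedWeight_neg_one]
    ring_nf

lemma measureReal_row_le [IsProbabilityMeasure P] (hA : IsSSBM P xs pp pm qp qm A) (i : Fin n) (ξ : ℝ) {t : ℝ}
    (ht : t ≤ 0) (a : ℝ) :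
    P.real {ω | ∑ j ∈ univ.erase i, xs i * xs j * signedWeight ξ (A ω i j) ≤ a} ≤
      exp (-t * a) * exp (((n : ℝ) / 2 - 1) * (pp * (exp t - 1) + pm * (exp (-(t * ξ)) - 1))
        + n / 2 * (qp * (exp (-t) - 1) + qm * (exp (t * ξ) - 1))) := by
  set Y : {j // j ≠ i} → Ω → ℝ := fun j ω => xs i * xs j * signedWeight ξ (A ω i j.1)
  have hY : ∀ j, Measurable (Y j) := fun j =>
    ((measurable_signedWeight ξ).comp (hA.meas i j)).const_mul _
  have hind : iIndepFun Y P :=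
    (hA.iIndepFun_row i).comp (fun j a => xs i * xs j * signedWeight ξ a) fun j => by fun_prop
  have herase : ∀ f : Fin n → ℝ, ∑ j ∈ univ.erase i, f j = ∑ j : {j // j ≠ i}, f j :=
    fun f => sum_subtype _ (by simp) f
  have hset : {ω | ∑ j ∈ univ.erase i, xs i * xs j * signedWeight ξ (A ω i j) ≤ a} =
      {ω | (∑ j, Y j) ω ≤ a} := by
    simp only [Finset.sum_apply, herase, Y]
  rw [hset]
  refine (measure_le_le_exp_mul_mgf a ht (hind.integrable_exp_mul_sum hY fun j _ =>
    integrable_exp_mul_comp_of_ternary (φ := fun a => xs i * xs j * signedWeight ξ a)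
      (hA.meas i j) (hA.vals · i j) (by simp) t)).trans ?_
  gcongr
  rw [hind.mgf_sum hY, ← sum_ite_mul_eq_one_erase hA.labels hA.balanced, herase, exp_sum]
  exact prod_le_prod (fun _ _ => mgf_nonneg) fun j _ => hA.mgf_term_le (Ne.symm j.2) ξ t

end IsSSBM

lemma exp_half_log_div {a b : ℝ} (ha : 0 < a) (hb : 0 < b) :
    exp (log (a / b) / 2) = √a / √b := by
  rw [← sqrt_div ha.le, sqrt_eq_rpow, rpow_def_of_pos (div_pos ha hb), div_eq_mul_one_div]

lemma exp_neg_half_log_div {a b : ℝ} (ha : 0 < a) (hb : 0 < b) :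
    exp (-(log (a / b) / 2)) = √b / √a := by
  rw [exp_neg, exp_half_log_div ha hb, inv_div]

lemma tendsto_log_natCast_div_natCast : Tendsto (fun n : ℕ => log n / n) atTop (𝓝 0) := by
  have h : Tendsto (fun x : ℝ => log x / x) atTop (𝓝 0) := by
    simpa using tendsto_pow_log_div_mul_add_atTop 1 0 1 one_ne_zero
  exact h.comp tendsto_natCast_atTop_atTop

lemma row_exponent_eq {a b c d : ℝ} (ha : 0 < a) (hb : 0 < b) (hc : 0 < c) (hd : 0 < d)
    (ℓ : ℝ) {m : ℝ} (hm : m ≠ 0) :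
    (m / 2 - 1) * (a * ℓ / m * (√b / √a - 1) + c * ℓ / m * (√d / √c - 1))
      + m / 2 * (b * ℓ / m * (√a / √b - 1) + d * ℓ / m * (√c / √d - 1))
      = -(ℓ / 2) * ((√a - √b) ^ 2 + (√c - √d) ^ 2) - ℓ / m * (√a * √b - a + √c * √d - c) := by
  have key : ∀ x y z w : ℝ, 0 < x → 0 < y → 0 < z → 0 < w →
      (m / 2 - 1) * (x ^ 2 * ℓ / m * (y / x - 1) + z ^ 2 * ℓ / m * (w / z - 1))
        + m / 2 * (y ^ 2 * ℓ / m * (x / y - 1) + w ^ 2 * ℓ / m * (z / w - 1))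
        = -(ℓ / 2) * ((x - y) ^ 2 + (z - w) ^ 2) - ℓ / m * (x * y - x ^ 2 + z * w - z ^ 2) := by
    intro x y z w hx hy hz hw
    field_simp
    ring
  simpa only [sq_sqrt ha.le, sq_sqrt hb.le, sq_sqrt hc.le, sq_sqrt hd.le] using
    key _ _ _ _ (sqrt_pos.2 ha) (sqrt_pos.2 hb) (sqrt_pos.2 hc) (sqrt_pos.2 hd)

lemma row_exponent_le {a b c d : ℝ} (ha : 0 < a) (hb : 0 < b) (hc : 0 < c) (hd : 0 < d)
    {L ℓ m γ γ' : ℝ} (hL : 0 < L) (hℓ : 0 < ℓ) (hm : 0 < m) (hγ : γ + 1 / ℓ < γ')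
    (hsmall : ℓ / m * |√a * √b - a + √c * √d - c| < L / 2) :
    L / 2 * (γ * ℓ) + ((m / 2 - 1) * (a * ℓ / m * (√b / √a - 1) + c * ℓ / m * (√d / √c - 1))
      + m / 2 * (b * ℓ / m * (√a / √b - 1) + d * ℓ / m * (√c / √d - 1)))
      ≤ ℓ * (-(1 / 2) * ((√a - √b) ^ 2 + (√c - √d) ^ 2) + γ' / 2 * L) := by
  have hslack : 1 < (γ' - γ) * ℓ := by
    have := (div_lt_iff₀ hℓ).1 (show 1 / ℓ < γ' - γ by linarith)
    linarith
  have hcorr : -(ℓ / m * (√a * √b - a + √c * √d - c)) ≤ L / 2 := by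
    have := mul_le_mul_of_nonneg_left (neg_le_abs (√a * √b - a + √c * √d - c))
      (div_pos hℓ hm).le
    linarith
  rw [row_exponent_eq ha hb hc hd ℓ hm.ne']
  nlinarith [mul_lt_mul_of_pos_right hslack hL]

/-- Chernoff-type tail bound for the entries of `W x*` under Assumption 1: if
`0 < γ + 1/log n < γ'`, then for all sufficiently large `n` and every index `i`,
`P(x*_i (Wx*)_i ≤ γ log n) ≤ n^{−½((√α⁺−√β⁺)² + (√α⁻−√β⁻)²) + (γ'/2) log(α⁺/β⁺)}`. -/
theorem stmt_11 (αp βp αm βm : ℝ)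
    (hβp : 0 < βp) (hαp : βp < αp) (hαm : 0 < αm) (hβm : αm < βm)
    (γ γ' : ℝ) :
    ∃ N : ℕ, ∀ n : ℕ, N ≤ n → Even n →
      0 < γ + 1 / Real.log n → γ + 1 / Real.log n < γ' →
      ∀ (Ω : Type) (mΩ : MeasurableSpace Ω) (P : Measure Ω), IsProbabilityMeasure P →
      ∀ (xs : Fin n → ℝ) (A : Ω → Matrix (Fin n) (Fin n) ℝ),
        IsSSBM P xs (αp * Real.log n / n) (αm * Real.log n / n)
          (βp * Real.log n / n) (βm * Real.log n / n) A →
        ∀ i : Fin n,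
          (P {ω | xs i * ((Wof (xiOf αp βp αm βm) A ω).mulVec xs) i ≤ γ * Real.log n}).toReal ≤
            (n : ℝ) ^ (-(1 / 2 : ℝ) * ((Real.sqrt αp - Real.sqrt βp) ^ 2
                + (Real.sqrt αm - Real.sqrt βm) ^ 2)
              + γ' / 2 * Real.log (αp / βp)) := by
  have hαp0 : 0 < αp := hβp.trans hαp
  have hβm0 : 0 < βm := hαm.trans hβm
  set L := log (αp / βp)
  have hL : 0 < L := log_pos ((one_lt_div hβp).2 hαp)
  have hev : ∀ᶠ n : ℕ in atTop,
      1 < log n ∧ log n / n * |√αp * √βp - αp + √αm * √βm - αm| < L / 2 :=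
    ((tendsto_log_atTop.comp tendsto_natCast_atTop_atTop).eventually_gt_atTop 1).and
      ((tendsto_log_natCast_div_natCast.mul_const _).eventually_lt_const (by simpa using hL))
  obtain ⟨N, hN⟩ := eventually_atTop.1 hev
  refine ⟨N, fun n hn _ _ hγ Ω _ P _ xs A hA i => ?_⟩
  obtain ⟨hlog, hsmall⟩ := hN n hn
  have hn0 : (0 : ℝ) < n := Nat.cast_pos.2 (Nat.pos_of_ne_zero (by rintro rfl; norm_num at hlog))
  have hξ : -(L / 2) * xiOf αp βp αm βm = -(log (βm / αm) / 2) := by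
    change -(L / 2) * (log (βm / αm) / L) = _
    field_simp
  simp_rw [← measureReal_def, Wof_mulVec_of_sum_eq_zero hA.balanced,
    mul_Atil_mulVec_apply (hA.diag _)]
  refine (hA.measureReal_row_le i _ (t := -(L / 2)) (by linarith) _).trans ?_
  simp only [hξ, neg_neg]
  rw [exp_neg_half_log_div hαp0 hβp, exp_half_log_div hαp0 hβp,
    exp_half_log_div hβm0 hαm, exp_neg_half_log_div hβm0 hαm, ← exp_add,
    rpow_def_of_pos hn0, exp_le_exp]
  exact row_exponent_le hαp0 hβp hαm hβm0 hL (by linarith) hn0 hγ hsmall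

end
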